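/- Let (Ω, P) be a probability space and let D_2, D_3, D_4, … : Ω → ℝ be square-integrable random variables whose autocovariances are absolutely summable, i.e., there exists a constant C such that Σ_{i=2}^{t} Σ_{j=2}^{t} |Cov(D_i, D_j)| ≤ C for every t ≥ 2. For each t ≥ 2, let r̂_t := Σ_{i=2}^{t} μ̂^{(t)}_i · D_i, where μ̂^{(t)}_i are the OLS fitting-window weights with window size δ = t (window {1, …, t}). Then the variance of the estimator vanishes asymptotically: Var(r̂_t) → 0 as t → ∞. -/

import Mathlib

open MeasureTheory

/-- The OLS fitting-window weight
`μ̂_{t⁻} = (Σ_{i=t⁻}^{t} (i − (2t−δ+1)/2)) /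
          (Σ_{i=t−δ+1}^{t} (i − (t−δ+1))·(i − (2t−δ+1)/2))`,
for a fitting window of size `δ` ending at day `t`, with arithmetic in `ℝ`. -/
noncomputable def olsWeight (t : ℤ) (δ : ℕ) (tm : ℤ) : ℝ :=
  (∑ i ∈ Finset.Icc tm t, ((i : ℝ) - (2 * (t : ℝ) - (δ : ℝ) + 1) / 2)) /
  (∑ i ∈ Finset.Icc (t - (δ : ℤ) + 1) t,
    ((i : ℝ) - ((t : ℝ) - (δ : ℝ) + 1)) * ((i : ℝ) - (2 * (t : ℝ) - (δ : ℝ) + 1) / 2))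

/-- Covariance: `Cov(U, V) = E[(U − E[U])·(V − E[V])]`. -/
noncomputable def cov {Ω : Type*} [MeasurableSpace Ω] (P : Measure Ω) (U V : Ω → ℝ) : ℝ :=
  ∫ ω, (U ω - ∫ x, U x ∂P) * (V ω - ∫ x, V x ∂P) ∂P

/-! For the full window `δ = t` the OLS weights have the closed form
`μ̂_i = 6 (t − i + 1)(i − 1) / ((t − 1) t (t + 1))`, so `0 ≤ μ̂_i ≤ 2 / t` by AM-GM. Expanding the
variance bilinearly then gives `|Var r̂_t| ≤ (2 / t)² Σ_{i,j} |Cov(D_i, D_j)| ≤ 4 C / t² → 0`. -/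

open ProbabilityTheory Finset

lemma sum_Icc_eq_sub_of_sub_eq {F f : ℤ → ℝ} (hF : ∀ i, F i - F (i - 1) = f i) {a b : ℤ}
    (hab : a ≤ b + 1) : ∑ i ∈ Icc a b, f i = F b - F (a - 1) := by
  induction b, (by omega : a - 1 ≤ b) using Int.leInduction with
  | base => simp
  | succ b hb ih =>
    rw [← insert_Icc_right_eq_Icc_add_one (by omega), sum_insert (by simp), ih (by omega),
      ← hF, add_sub_cancel_right]
    ring

lemma sum_Icc_sub_const (c : ℝ) {a b : ℤ} (hab : a ≤ b + 1) :
    ∑ i ∈ Icc a b, ((i : ℝ) - c) = (b - a + 1) * (a + b - 2 * c) / 2 := by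
  rw [sum_Icc_eq_sub_of_sub_eq (F := fun i : ℤ => ((i : ℝ) - c) * (i - c + 1) / 2)
    (fun i => by push_cast; ring) hab]
  push_cast
  ring

lemma sum_Icc_window (t : ℤ) (δ : ℕ) :
    ∑ i ∈ Icc (t - δ + 1) t, ((i : ℝ) - (t - δ + 1)) * (i - (2 * t - δ + 1) / 2)
      = (δ - 1) * δ * (δ + 1) / 12 := by
  set a : ℝ := t - δ + 1
  rw [sum_Icc_eq_sub_of_sub_eq (F := fun i : ℤ =>
      (i - a) * (i - a + 1) * (2 * (i - a) + 1) / 6 - (δ - 1) / 4 * (i - a) * (i - a + 1))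
    (fun i => by push_cast; ring) (by omega)]
  push_cast
  ring

lemma olsWeight_eq {t tm : ℤ} (δ : ℕ) (htm : tm ≤ t + 1) :
    olsWeight t δ tm = 6 * (t - tm + 1) * (tm - t + δ - 1) / ((δ - 1) * δ * (δ + 1)) := by
  rw [olsWeight, sum_Icc_sub_const _ htm, sum_Icc_window, div_div_eq_mul_div]
  ring

lemma olsWeight_self {t i : ℕ} (hit : i ≤ t + 1) :
    olsWeight t t i = 6 * ((t : ℝ) - i + 1) * (i - 1) / ((t - 1) * t * (t + 1)) := by
  rw [olsWeight_eq t (by omega)]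
  push_cast
  ring

lemma olsWeight_self_nonneg {t i : ℕ} (hi : 1 ≤ i) (hit : i ≤ t + 1) :
    0 ≤ olsWeight t t i := by
  have hi' : (1 : ℝ) ≤ i := by exact_mod_cast hi
  have hit' : (i : ℝ) ≤ t + 1 := by exact_mod_cast hit
  rw [olsWeight_self hit]
  apply div_nonneg (by nlinarith)
  rcases Nat.eq_zero_or_pos t with rfl | ht
  · simp
  · have ht' : (1 : ℝ) ≤ t := by exact_mod_cast ht
    exact mul_nonneg (mul_nonneg (by linarith) (by linarith)) (by linarith)

lemma olsWeight_self_le {t i : ℕ} (ht : 2 ≤ t) (hit : i ≤ t + 1) :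
    olsWeight t t i ≤ 2 / t := by
  have ht' : (2 : ℝ) ≤ t := by exact_mod_cast ht
  have hden : (0 : ℝ) < (t - 1) * t * (t + 1) :=
    mul_pos (mul_pos (by linarith) (by linarith)) (by linarith)
  rw [olsWeight_self hit, div_le_div_iff₀ hden (by positivity)]
  have amgm : 4 * (((t : ℝ) - i + 1) * (i - 1)) ≤ (t : ℝ) ^ 2 := by
    nlinarith [sq_nonneg ((t : ℝ) - 2 * i + 2)]
  nlinarith [mul_le_mul_of_nonneg_right amgm (by positivity : (0 : ℝ) ≤ t)]

lemma abs_olsWeight_self_le {t i : ℕ} (hi : 2 ≤ i) (hit : i ≤ t) :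
    |olsWeight t t i| ≤ 2 / t := by
  rw [abs_of_nonneg (olsWeight_self_nonneg (by omega) (by omega))]
  exact olsWeight_self_le (by omega) (by omega)

lemma cov_eq_covariance {Ω : Type*} [MeasurableSpace Ω] (P : Measure Ω) (U V : Ω → ℝ) :
    cov P U V = cov[U, V; P] :=
  rfl

lemma covariance_fun_sum_mul_fun_sum_mul {Ω ι : Type*} [MeasurableSpace Ω] {μ : Measure Ω}
    [IsFiniteMeasure μ] {X : ι → Ω → ℝ} {s : Finset ι}
    (hX : ∀ i ∈ s, MemLp (X i) 2 μ) (v w : ι → ℝ) :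
    cov[fun ω ↦ ∑ i ∈ s, v i * X i ω, fun ω ↦ ∑ j ∈ s, w j * X j ω; μ]
      = ∑ i ∈ s, ∑ j ∈ s, v i * w j * cov[X i, X j; μ] := by
  rw [covariance_fun_sum_fun_sum' (fun i hi ↦ (hX i hi).const_mul (v i))
    (fun j hj ↦ (hX j hj).const_mul (w j))]
  simp only [covariance_const_mul_left, covariance_const_mul_right]
  exact sum_congr rfl fun i _ ↦ sum_congr rfl fun j _ ↦ by ring

lemma abs_sum_sum_mul_mul_le {ι : Type*} {s : Finset ι} {w : ι → ℝ} {b : ℝ}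
    (hw : ∀ i ∈ s, |w i| ≤ b) (c : ι → ι → ℝ) :
    |∑ i ∈ s, ∑ j ∈ s, w i * w j * c i j| ≤ b ^ 2 * ∑ i ∈ s, ∑ j ∈ s, |c i j| := by
  rw [mul_sum]
  refine (abs_sum_le_sum_abs _ _).trans (sum_le_sum fun i hi ↦ ?_)
  rw [mul_sum]
  refine (abs_sum_le_sum_abs _ _).trans (sum_le_sum fun j hj ↦ ?_)
  rw [abs_mul, abs_mul, sq]
  have hb : 0 ≤ b := (abs_nonneg _).trans (hw i hi)
  gcongr
  · exact hw i hi
  · exact hw j hj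

theorem stmt_17 {Ω : Type*} [MeasurableSpace Ω] (P : Measure Ω) [IsProbabilityMeasure P]
    (D : ℕ → Ω → ℝ) (hD : ∀ i, MemLp (D i) 2 P)
    (C : ℝ)
    (hC : ∀ t : ℕ, 2 ≤ t →
      ∑ i ∈ Finset.Icc 2 t, ∑ j ∈ Finset.Icc 2 t, |cov P (D i) (D j)| ≤ C) :
    Filter.Tendsto
      (fun t : ℕ =>
        cov P (fun ω => ∑ i ∈ Finset.Icc 2 t, olsWeight (t : ℤ) t (i : ℤ) * D i ω)
              (fun ω => ∑ i ∈ Finset.Icc 2 t, olsWeight (t : ℤ) t (i : ℤ) * D i ω))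
      Filter.atTop (nhds 0) := by
  have hbound : ∀ t : ℕ, 2 ≤ t →
      ‖cov P (fun ω => ∑ i ∈ Icc 2 t, olsWeight (t : ℤ) t (i : ℤ) * D i ω)
        (fun ω => ∑ i ∈ Icc 2 t, olsWeight (t : ℤ) t (i : ℤ) * D i ω)‖ ≤ (2 / t) ^ 2 * C := by
    intro t ht
    have hw : ∀ i ∈ Icc 2 t, |olsWeight (t : ℤ) t (i : ℤ)| ≤ 2 / t := fun i hi ↦
      abs_olsWeight_self_le (mem_Icc.1 hi).1 (mem_Icc.1 hi).2
    rw [Real.norm_eq_abs, cov_eq_covariance,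
      covariance_fun_sum_mul_fun_sum_mul (fun i _ ↦ hD i)]
    exact (abs_sum_sum_mul_mul_le hw _).trans (by gcongr; exact hC t ht)
  refine squeeze_zero_norm' (Filter.eventually_atTop.2 ⟨2, hbound⟩) ?_
  simpa using ((tendsto_const_div_atTop_nhds_zero_nat 2).pow 2).mul_const C
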